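/- Let g:[a,b]→ℝ be left-continuous on (a,b) and increasing, and let f:[a,b]→ℝ be g-Lipschitz continuous with constant H (not necessarily monotone). Then f^C is g^C-Lipschitz continuous with constant H. -/

import Mathlib

open Set

/-- Right jump of a function: `u(t⁺) - u(t)`. -/
noncomputable def rjump (u : ℝ → ℝ) (t : ℝ) : ℝ := Function.rightLim u t - u t

/-- Cumulative jump part of `u` on `[a, t)`: `u^B(t) = Σ_{s ∈ [a,t)} Δ⁺u(s)`. -/
noncomputable def jumpPart (u : ℝ → ℝ) (a t : ℝ) : ℝ :=
  ∑' s : ℝ, Set.indicator (Set.Ico a t) (fun v => rjump u v) s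

/-- Continuous part of `u` (relative to the base point `a`): `u^C = u - u^B`. -/
noncomputable def contPart (u : ℝ → ℝ) (a t : ℝ) : ℝ := u t - jumpPart u a t

/-- `I` is the Kurzweil–Stieltjes integral `∫_a^b f dg`: for every `ε > 0` there is a
gauge `δ` such that every `δ`-fine tagged partition of `[a,b]` has Riemann–Stieltjes
sum within `ε` of `I`. -/
def IsKSIntegral (f g : ℝ → ℝ) (a b I : ℝ) : Prop :=
  ∀ ε > (0:ℝ), ∃ δ : ℝ → ℝ, (∀ x, 0 < δ x) ∧
    ∀ (n : ℕ) (t ξ : ℕ → ℝ),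
      t 0 = a → t n = b →
      (∀ i < n, t i < t (i + 1)) →
      (∀ i < n, t i ≤ ξ i ∧ ξ i ≤ t (i + 1)) →
      (∀ i < n, ξ i - δ (ξ i) < t i ∧ t (i + 1) < ξ i + δ (ξ i)) →
      |(∑ i ∈ Finset.range n, f (ξ i) * (g (t (i + 1)) - g (t i))) - I| < ε

/-- `f` is `g`-Lipschitz continuous on `[a,b]` with constant `H`. -/
def GLipschitzOn (f g : ℝ → ℝ) (H a b : ℝ) : Prop :=
  ∀ t ∈ Set.Icc a b, ∀ s ∈ Set.Icc a b, |f t - f s| ≤ H * |g t - g s|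

/-- `g` is left-continuous at every point of `s`. -/
def LeftContOn (g : ℝ → ℝ) (s : Set ℝ) : Prop :=
  ∀ t ∈ s, Filter.Tendsto g (nhdsWithin t (Set.Iio t)) (nhds (g t))

/-!
Since `g` is increasing, `g`-Lipschitz continuity of `f` with constant `H` means
`|f y - f x| ≤ H (g y - g x)` for `x ≤ y`, so `p = (H g + f) / 2` and `q = (H g - f) / 2` are
increasing with `f = p - q` and `H g = p + q`. Increasing functions have right limits, and
their jumps on `[s, t)` sum to at most their increment on `[s, t]`; hence the continuous part
of an increasing function is increasing, and taking continuous parts is linear on increasing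
functions. Therefore `|Δf^C| = |Δp^C - Δq^C| ≤ Δp^C + Δq^C = H Δg^C = H |Δg^C|`.
-/

open Filter Topology Function

section RightJumps

variable {a b c t : ℝ} {m u v : ℝ → ℝ}

theorem MonotoneOn.tendsto_rightLim (hm : MonotoneOn m (Icc a b)) (hc : c ∈ Ico a b) :
    Tendsto m (𝓝[>] c) (𝓝 (rightLim m c)) := by
  have hsub : Ioo c b ⊆ Icc a b := Ioo_subset_Icc_self.trans (Icc_subset_Icc_left hc.1)
  have hlim := (hm.mono hsub).tendsto_nhdsWithin_Ioo_right (nonempty_Ioo.2 hc.2)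
    ⟨m c, forall_mem_image.2 fun y hy => hm ⟨hc.1, hc.2.le⟩ (hsub hy) hy.1.le⟩
  rwa [rightLim_eq_of_tendsto hlim]

theorem MonotoneOn.le_rightLim (hm : MonotoneOn m (Icc a b)) (hc : c ∈ Ico a b) :
    m c ≤ rightLim m c :=
  ge_of_tendsto (hm.tendsto_rightLim hc) <| by
    filter_upwards [Ioo_mem_nhdsGT hc.2] with y hy
    exact hm ⟨hc.1, hc.2.le⟩ ⟨hc.1.trans hy.1.le, hy.2.le⟩ hy.1.le

theorem MonotoneOn.rightLim_le (hm : MonotoneOn m (Icc a b)) (hc : a ≤ c) (hct : c < t)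
    (ht : t ≤ b) : rightLim m c ≤ m t :=
  le_of_tendsto (hm.tendsto_rightLim ⟨hc, hct.trans_le ht⟩) <| by
    filter_upwards [Ioo_mem_nhdsGT hct] with y hy
    exact hm ⟨hc.trans hy.1.le, hy.2.le.trans ht⟩ ⟨hc.trans hct.le, ht⟩ hy.2.le

theorem MonotoneOn.rjump_nonneg (hm : MonotoneOn m (Icc a b)) (hc : c ∈ Ico a b) :
    0 ≤ rjump m c :=
  sub_nonneg.2 (hm.le_rightLim hc)

theorem rjump_add {x : ℝ} (hu : Tendsto u (𝓝[>] x) (𝓝 (rightLim u x)))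
    (hv : Tendsto v (𝓝[>] x) (𝓝 (rightLim v x))) : rjump (u + v) x = rjump u x + rjump v x := by
  rw [rjump, rightLim_eq_of_tendsto (f := u + v) (hu.add hv), rjump, rjump, Pi.add_apply]
  ring

theorem rjump_sub {x : ℝ} (hu : Tendsto u (𝓝[>] x) (𝓝 (rightLim u x)))
    (hv : Tendsto v (𝓝[>] x) (𝓝 (rightLim v x))) : rjump (u - v) x = rjump u x - rjump v x := by
  rw [rjump, rightLim_eq_of_tendsto (f := u - v) (hu.sub hv), rjump, rjump, Pi.sub_apply]
  ring

theorem rjump_const_mul {x : ℝ} (k : ℝ) (hu : Tendsto u (𝓝[>] x) (𝓝 (rightLim u x))) :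
    rjump (fun y => k * u y) x = k * rjump u x := by
  rw [rjump, rightLim_eq_of_tendsto (hu.const_mul k), rjump]
  ring

theorem MonotoneOn.sum_rjump_le (hm : MonotoneOn m (Icc a b)) (hc : a ≤ c) (hct : c ≤ t)
    (ht : t ≤ b) {F : Finset ℝ} (hF : ↑F ⊆ Ico c t) : ∑ x ∈ F, rjump m x ≤ m t - m c := by
  classical
  induction F using Finset.induction_on_max generalizing t with
  | empty => simpa using hm ⟨hc, hct.trans ht⟩ ⟨hc.trans hct, ht⟩ hct
  | insert M F hlt ih =>
    have hM : M ∈ Ico c t := hF (Finset.mem_insert_self M F)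
    have hFM : ↑F ⊆ Ico c M := fun x hx => ⟨(hF (Finset.mem_insert_of_mem hx)).1, hlt x hx⟩
    have hsum := ih hM.1 (hM.2.le.trans ht) hFM
    have hjump := hm.rightLim_le (hc.trans hM.1) hM.2 ht
    rw [Finset.sum_insert fun h => (hlt M h).false, rjump]
    linarith

theorem MonotoneOn.indicator_rjump_nonneg (hm : MonotoneOn m (Icc a b)) (hc : a ≤ c)
    (ht : t ≤ b) : 0 ≤ (Ico c t).indicator (rjump m) :=
  fun _ => indicator_nonneg (fun _ hx => hm.rjump_nonneg ⟨hc.trans hx.1, hx.2.trans_le ht⟩) _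

theorem MonotoneOn.sum_indicator_rjump_le (hm : MonotoneOn m (Icc a b)) (hc : a ≤ c)
    (hct : c ≤ t) (ht : t ≤ b) (F : Finset ℝ) :
    ∑ x ∈ F, (Ico c t).indicator (rjump m) x ≤ m t - m c := by
  classical
  rw [Finset.sum_indicator_eq_sum_filter]
  exact hm.sum_rjump_le hc hct ht fun x hx => (Finset.mem_filter.1 hx).2

theorem MonotoneOn.summable_indicator_rjump (hm : MonotoneOn m (Icc a b)) (hc : a ≤ c)
    (hct : c ≤ t) (ht : t ≤ b) : Summable ((Ico c t).indicator (rjump m)) :=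
  summable_of_sum_le (hm.indicator_rjump_nonneg hc ht) (hm.sum_indicator_rjump_le hc hct ht)

theorem MonotoneOn.tsum_indicator_rjump_le (hm : MonotoneOn m (Icc a b)) (hc : a ≤ c)
    (hct : c ≤ t) (ht : t ≤ b) : ∑' x, (Ico c t).indicator (rjump m) x ≤ m t - m c :=
  Real.tsum_le_of_sum_le (hm.indicator_rjump_nonneg hc ht) (hm.sum_indicator_rjump_le hc hct ht)

end RightJumps

section ContinuousPart

variable {a b s t : ℝ} {m u v : ℝ → ℝ}

theorem MonotoneOn.jumpPart_sub_jumpPart (hm : MonotoneOn m (Icc a b)) (has : a ≤ s)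
    (hst : s ≤ t) (ht : t ≤ b) :
    jumpPart m a t - jumpPart m a s = ∑' x, (Ico s t).indicator (rjump m) x := by
  rw [jumpPart, jumpPart, ← Ico_union_Ico_eq_Ico has hst,
    indicator_union_of_disjoint Ico_disjoint_Ico_same,
    (hm.summable_indicator_rjump le_rfl has (hst.trans ht)).tsum_add
      (hm.summable_indicator_rjump has hst ht)]
  ring

theorem MonotoneOn.monotoneOn_contPart (hm : MonotoneOn m (Icc a b)) :
    MonotoneOn (contPart m a) (Icc a b) := by
  intro s hs t ht hst
  have hjump := hm.jumpPart_sub_jumpPart hs.1 hst ht.2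
  have hbound := hm.tsum_indicator_rjump_le hs.1 hst ht.2
  simp only [contPart]
  linarith

theorem MonotoneOn.contPart_add (hu : MonotoneOn u (Icc a b)) (hv : MonotoneOn v (Icc a b))
    (ht : t ∈ Icc a b) : contPart (u + v) a t = contPart u a t + contPart v a t := by
  have hjump : (Ico a t).indicator (rjump (u + v)) = (Ico a t).indicator (rjump u + rjump v) :=
    indicator_congr fun x hx => rjump_add (hu.tendsto_rightLim ⟨hx.1, hx.2.trans_le ht.2⟩)
      (hv.tendsto_rightLim ⟨hx.1, hx.2.trans_le ht.2⟩)
  simp only [contPart, jumpPart, hjump, indicator_add', Pi.add_apply]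
  rw [Summable.tsum_add (hu.summable_indicator_rjump le_rfl ht.1 ht.2)
    (hv.summable_indicator_rjump le_rfl ht.1 ht.2)]
  ring

theorem MonotoneOn.contPart_sub (hu : MonotoneOn u (Icc a b)) (hv : MonotoneOn v (Icc a b))
    (ht : t ∈ Icc a b) : contPart (u - v) a t = contPart u a t - contPart v a t := by
  have hjump : (Ico a t).indicator (rjump (u - v)) = (Ico a t).indicator (rjump u - rjump v) :=
    indicator_congr fun x hx => rjump_sub (hu.tendsto_rightLim ⟨hx.1, hx.2.trans_le ht.2⟩)
      (hv.tendsto_rightLim ⟨hx.1, hx.2.trans_le ht.2⟩)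
  simp only [contPart, jumpPart, hjump, indicator_sub', Pi.sub_apply]
  rw [Summable.tsum_sub (hu.summable_indicator_rjump le_rfl ht.1 ht.2)
    (hv.summable_indicator_rjump le_rfl ht.1 ht.2)]
  ring

theorem MonotoneOn.contPart_const_mul (hu : MonotoneOn u (Icc a b)) (c : ℝ) (ht : t ∈ Icc a b) :
    contPart (fun y => c * u y) a t = c * contPart u a t := by
  have hjump : (Ico a t).indicator (rjump fun y => c * u y) = (Ico a t).indicator (c * rjump u ·) :=
    indicator_congr fun x hx => rjump_const_mul c (hu.tendsto_rightLim ⟨hx.1, hx.2.trans_le ht.2⟩)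
  simp only [contPart, jumpPart, hjump, indicator_const_mul, tsum_mul_left]
  ring

end ContinuousPart

theorem GLipschitzOn.exists_monotoneOn_sub {a b H : ℝ} {f g : ℝ → ℝ}
    (hg : MonotoneOn g (Icc a b)) (hf : GLipschitzOn f g H a b) :
    ∃ p q : ℝ → ℝ, MonotoneOn p (Icc a b) ∧ MonotoneOn q (Icc a b) ∧
      f = p - q ∧ (fun x => H * g x) = p + q := by
  have hincr : ∀ x ∈ Icc a b, ∀ y ∈ Icc a b, x ≤ y → |f y - f x| ≤ H * (g y - g x) :=
    fun x hx y hy hxy => by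
      simpa only [abs_of_nonneg (sub_nonneg.2 (hg hx hy hxy))] using hf y hy x hx
  refine ⟨fun x => (H * g x + f x) / 2, fun x => (H * g x - f x) / 2, ?_, ?_, ?_, ?_⟩
  · intro x hx y hy hxy
    linarith [abs_le.1 (hincr x hx y hy hxy)]
  · intro x hx y hy hxy
    linarith [abs_le.1 (hincr x hx y hy hxy)]
  · funext x
    simp only [Pi.sub_apply]
    ring
  · funext x
    simp only [Pi.add_apply]
    ring

theorem contPart_gLipschitz_general
    (a b H : ℝ) (g f : ℝ → ℝ)
    (hg : MonotoneOn g (Set.Icc a b))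
    (hf : GLipschitzOn f g H a b) :
    ∀ t ∈ Set.Icc a b, ∀ s ∈ Set.Icc a b,
      |contPart f a t - contPart f a s| ≤ H * |contPart g a t - contPart g a s| := by
  intro t ht s hs
  wlog hst : s ≤ t generalizing s t
  · rw [abs_sub_comm, abs_sub_comm (contPart g a t)]
    exact this s hs t ht (le_of_not_ge hst)
  obtain ⟨p, q, hp, hq, rfl, hpq⟩ := hf.exists_monotoneOn_sub hg
  have hP := hp.monotoneOn_contPart hs ht hst
  have hQ := hq.monotoneOn_contPart hs ht hst
  have hG := hg.monotoneOn_contPart hs ht hst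
  have hgC : H * (contPart g a t - contPart g a s) =
      (contPart p a t - contPart p a s) + (contPart q a t - contPart q a s) := by
    rw [mul_sub, ← hg.contPart_const_mul H ht, ← hg.contPart_const_mul H hs, hpq,
      hp.contPart_add hq ht, hp.contPart_add hq hs]
    ring
  rw [hp.contPart_sub hq ht, hp.contPart_sub hq hs, abs_of_nonneg (sub_nonneg.2 hG), hgC]
  exact abs_le.2 ⟨by linarith, by linarith⟩

/-- If `g : [a,b] → ℝ` is left-continuous on `(a,b)` and increasing and
`f` is `g`-Lipschitz with constant `H` (not necessarily monotone), then `f^C` is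
`g^C`-Lipschitz with constant `H`. -/
theorem contPart_gLipschitz
    (a b H : ℝ) (hab : a ≤ b) (g f : ℝ → ℝ)
    (hg : MonotoneOn g (Set.Icc a b))
    (hglc : LeftContOn g (Set.Ioo a b))
    (hf : GLipschitzOn f g H a b) :
    ∀ t ∈ Set.Icc a b, ∀ s ∈ Set.Icc a b,
      |contPart f a t - contPart f a s| ≤ H * |contPart g a t - contPart g a s| :=
  contPart_gLipschitz_general a b H g f hg hf
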